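/- arXiv:2604.06544 — 2 statements merged into one kernel-verified Lean document; each statement's English description precedes it below -/
import Mathlib

section
/- For every pair of complex numbers p, q with p ≠ 0, there exists a nonzero complex number c such that conj(q) - p·conj(c)/c is not a real number. -/
/- As `c` runs over `1`, `I`, `1 + I`, the factor `conj c / c` runs over `1`, `-1`, `-I`; if all three
imaginary parts vanished, the resulting linear equations would force `p = 0`. -/

open Complex

lemma conj_I_div_I : starRingEnd ℂ I / I = -1 := by
  rw [conj_I, neg_div, div_self I_ne_zero]

lemma one_add_I_ne_zero : (1 + I : ℂ) ≠ 0 := by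
  intro h
  simpa using congrArg re h

lemma conj_one_add_I_div_one_add_I : starRingEnd ℂ (1 + I) / (1 + I) = -I := by
  rw [div_eq_iff one_add_I_ne_zero, map_add, map_one, conj_I]
  ring_nf
  rw [I_sq]
  ring

theorem stmt_3 (p q : ℂ) (hp : p ≠ 0) :
    ∃ c : ℂ, c ≠ 0 ∧ (starRingEnd ℂ q - p * starRingEnd ℂ c / c).im ≠ 0 := by
  by_contra! h
  have h_one := h 1 one_ne_zero
  have h_I := h I I_ne_zero
  have h_one_add_I := h (1 + I) one_add_I_ne_zero
  simp only [mul_div_assoc, conj_I_div_I, conj_one_add_I_div_one_add_I, map_one, div_one, sub_im, conj_im,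
    mul_im, mul_neg, mul_one, mul_zero, add_zero, neg_im, I_re, I_im] at h_one h_I h_one_add_I
  exact hp (Complex.ext (by rw [zero_re]; linarith) (by rw [zero_im]; linarith))
end

section
/- Let a, q ∈ ℝ \ {0}, p ∈ ℂ \ {0}, and r ∈ ℕ. Assume q ∉ (1/2)ℤ and q + |p| ∉ (1/2)ℤ and q - |p| ∉ (1/2)ℤ. Then there exists C > 0 such that for all m ∈ (1/2)ℤ and all k ∈ ℤ, |(m + i·a·k^r - q)² - |p|²| ≥ C. -/
/-!
Write the base as `u + i v` with `u = m - q` and `v = a kʳ`. When `kʳ ≠ 0` we have `|v| ≥ |a|`,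
and the imaginary part `2uv` of the discriminant is at least `2|a| · dist(q, ½ℤ)`. When `kʳ = 0`
the discriminant is the real number `(u - |p|)(u + |p|)`, whose factors are bounded below by
`dist(q ± |p|, ½ℤ)`.
-/

open Complex

lemma exists_pos_le_abs_half_int_sub {x : ℝ} (hx : ¬∃ n : ℤ, x = n / 2) :
    ∃ δ > 0, ∀ n : ℤ, δ ≤ |(n : ℝ) / 2 - x| := by
  refine ⟨|2 * x - round (2 * x)| / 2, ?_, fun n => ?_⟩
  · exact half_pos (abs_pos.mpr fun h => hx ⟨round (2 * x), by linarith⟩)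
  · have hround := round_le (2 * x) n
    have hscale : |(n : ℝ) / 2 - x| = |2 * x - n| / 2 := by
      rw [abs_sub_comm (2 * x), show (n : ℝ) - 2 * x = ((n : ℝ) / 2 - x) * 2 by ring, abs_mul,
        abs_two, mul_div_cancel_right₀ _ two_ne_zero]
    rw [hscale]
    linarith

lemma two_mul_abs_mul_abs_le_norm_sq_sub (u v c : ℝ) :
    2 * |u| * |v| ≤ ‖((u : ℂ) + I * v) ^ 2 - (c : ℂ) ^ 2‖ := by
  have him : (((u : ℂ) + I * v) ^ 2 - (c : ℂ) ^ 2).im = 2 * u * v := by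
    simp only [sq, sub_im, mul_im, add_re, ofReal_re, mul_re, I_re, zero_mul, I_im, ofReal_im,
      mul_zero, sub_self, add_zero, add_im, one_mul, zero_add, sub_zero]
    ring
  calc 2 * |u| * |v| = |2 * u * v| := by rw [abs_mul, abs_mul, abs_two]
    _ ≤ _ := him ▸ abs_im_le_norm _

lemma norm_ofReal_sq_sub_ofReal_sq (u c : ℝ) :
    ‖(u : ℂ) ^ 2 - (c : ℂ) ^ 2‖ = |u - c| * |u + c| := by
  rw [← abs_mul, ← Real.norm_eq_abs, ← norm_real]
  push_cast
  ring_nf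

theorem stmt_7_general (a q : ℝ) (ha : a ≠ 0) (p : ℂ) (r : ℕ)
    (h1 : ¬ ∃ n : ℤ, q = n / 2)
    (h2 : ¬ ∃ n : ℤ, q + ‖p‖ = n / 2)
    (h3 : ¬ ∃ n : ℤ, q - ‖p‖ = n / 2) :
    ∃ C : ℝ, 0 < C ∧ ∀ m : ℝ, (∃ n : ℤ, m = n / 2) → ∀ k : ℤ,
      C ≤ ‖((m : ℂ) + Complex.I * a * (k : ℂ) ^ r - q) ^ 2
            - (‖p‖ : ℂ) ^ 2‖ := by
  obtain ⟨δ₁, hδ₁, hq⟩ := exists_pos_le_abs_half_int_sub h1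
  obtain ⟨δ₂, hδ₂, hqp⟩ := exists_pos_le_abs_half_int_sub h2
  obtain ⟨δ₃, hδ₃, hqm⟩ := exists_pos_le_abs_half_int_sub h3
  have ha' := abs_pos.mpr ha
  refine ⟨min (2 * δ₁ * |a|) (δ₂ * δ₃), by positivity, ?_⟩
  rintro _ ⟨n, rfl⟩ k
  have hbase : (((n : ℝ) / 2 : ℝ) : ℂ) + I * a * (k : ℂ) ^ r - q
      = (((n : ℝ) / 2 - q : ℝ) : ℂ) + I * ((a * ((k ^ r : ℤ) : ℝ) : ℝ) : ℂ) := by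
    push_cast
    ring
  rw [hbase]
  rcases eq_or_ne (k ^ r) 0 with hk | hk
  · rw [hk, Int.cast_zero, mul_zero, ofReal_zero, mul_zero, add_zero,
      norm_ofReal_sq_sub_ofReal_sq, sub_sub, sub_add]
    exact (min_le_right _ _).trans
      (mul_le_mul (hqp n) (hqm n) hδ₃.le (abs_nonneg _))
  · have hkr : (1 : ℝ) ≤ |((k ^ r : ℤ) : ℝ)| := by exact_mod_cast Int.one_le_abs hk
    calc min (2 * δ₁ * |a|) (δ₂ * δ₃) ≤ 2 * |(n : ℝ) / 2 - q| * (|a| * 1) := by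
          rw [mul_one]
          exact (min_le_left _ _).trans (by gcongr; exact hq n)
      _ ≤ 2 * |(n : ℝ) / 2 - q| * |a * ((k ^ r : ℤ) : ℝ)| := by
          rw [abs_mul]
          gcongr
      _ ≤ _ := two_mul_abs_mul_abs_le_norm_sq_sub _ _ _

theorem stmt_7 (a q : ℝ) (ha : a ≠ 0) (hq0 : q ≠ 0) (p : ℂ) (hp : p ≠ 0) (r : ℕ)
    (h1 : ¬ ∃ n : ℤ, q = n / 2)
    (h2 : ¬ ∃ n : ℤ, q + ‖p‖ = n / 2)
    (h3 : ¬ ∃ n : ℤ, q - ‖p‖ = n / 2) :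
    ∃ C : ℝ, 0 < C ∧ ∀ m : ℝ, (∃ n : ℤ, m = n / 2) → ∀ k : ℤ,
      C ≤ ‖((m : ℂ) + Complex.I * a * (k : ℂ) ^ r - q) ^ 2
            - (‖p‖ : ℂ) ^ 2‖ :=
  stmt_7_general a q ha p r h1 h2 h3
end
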